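/- arXiv:1404.3873 — 3 statements merged into one kernel-verified Lean document; each statement's English description precedes it below -/
import Mathlib

section
/- For real q with 0 < q < 1, Z(3)^2 = 2·Z(3,3) + Z(4) + 4·Z(6), where Z(3) = Σ_{n≥1} q^n(1+q^n)/(1-q^n)^3, Z(3,3) = Σ_{n>m≥1} [q^n(1+q^n)/(1-q^n)^3]·[q^m(1+q^m)/(1-q^m)^3], Z(4) = Σ_{n≥1} q^{2n}/(1-q^n)^4, and Z(6) = Σ_{n≥1} q^{3n}/(1-q^n)^6. -/
/-!
Multiplying out the square of the absolutely convergent series Z(3) = Σ f(n) gives a sum over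
ℕ × ℕ, which splits into the two off-diagonal triangles, equal by symmetry, and the diagonal
Σ f(n)². With t = qⁿ, the identity t²(1+t)² = t²(1-t)² + 4t³ turns f(n)² into the n-th terms of
Z(4) + 4·Z(6).
-/

open Filter Asymptotics

theorem tsum_sq_eq_two_mul_tsum_lt_add_tsum_sq {ι R : Type*} [LinearOrder ι] [NormedCommRing R]
    [CompleteSpace R] {f : ι → R} (hf : Summable (‖f ·‖)) :
    (∑' i, f i) ^ 2 = 2 * ∑' p : {p : ι × ι // p.2 < p.1}, f p.1.1 * f p.1.2 + ∑' i, f i ^ 2 := by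
  set g : ι × ι → R := fun p => f p.1 * f p.2
  have hg : Summable g := summable_mul_of_summable_norm hf hf
  have hcompl : {p : ι × ι | p.2 < p.1}ᶜ = {p | p.1 < p.2} ∪ Set.range fun i => (i, i) := by
    ext ⟨a, b⟩
    simp only [Set.mem_compl_iff, Set.mem_ofPred_eq, not_lt, Set.mem_union, Set.mem_range,
      Prod.mk.injEq]
    constructor
    · intro hab
      rcases hab.lt_or_eq with h | rfl
      · exact Or.inl h
      · exact Or.inr ⟨a, rfl, rfl⟩
    · rintro (h | ⟨i, rfl, rfl⟩)
      exacts [h.le, le_rfl]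
  have hdisj : Disjoint {p : ι × ι | p.1 < p.2} (Set.range fun i => (i, i)) := by
    rw [Set.disjoint_left]
    rintro p hp ⟨i, rfl⟩
    exact lt_irrefl i hp
  have hswap : ∑' p : {p : ι × ι | p.1 < p.2}, g p = ∑' p : {p : ι × ι | p.2 < p.1}, g p := by
    rw [← ((Equiv.prodComm ι ι).subtypeEquiv fun _ => Iff.rfl).tsum_eq]
    exact tsum_congr fun _ => mul_comm _ _
  have hdiag : ∑' p : Set.range (fun i : ι => (i, i)), g p = ∑' i, f i ^ 2 := by
    rw [tsum_range g fun _ _ h => (Prod.mk.inj h).1]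
    simp only [g, sq]
  rw [sq, tsum_mul_tsum_of_summable_norm hf hf]
  change ∑' p, g p = 2 * ∑' p : {p : ι × ι | p.2 < p.1}, g p + _
  rw [← Summable.tsum_add_tsum_compl (s := {p | p.2 < p.1}) (hg.subtype _) (hg.subtype _),
    hcompl, (hg.subtype _).tsum_union_disjoint hdisj (hg.subtype _), hswap, hdiag]
  ring

theorem summable_pow_mul_comp_pow {q : ℝ} (h0 : 0 ≤ q) (h1 : q < 1) {h : ℝ → ℝ}
    (hh : ContinuousAt h 0) : Summable fun n : ℕ => q ^ n * h (q ^ n) := by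
  have hbdd : (fun n : ℕ => h (q ^ n)) =O[atTop] fun _ => (1 : ℝ) :=
    (hh.tendsto.comp (tendsto_pow_atTop_nhds_zero_of_lt_one h0 h1)).isBigO_one ℝ
  refine summable_of_isBigO_nat (summable_geometric_of_lt_one h0 h1) ?_
  simpa using (isBigO_refl (fun n : ℕ => q ^ n) atTop).mul hbdd

theorem sq_mul_one_add_div_one_sub_pow_three {t : ℝ} (ht : t ≠ 1) :
    (t * (1 + t) / (1 - t) ^ 3) ^ 2 = t ^ 2 / (1 - t) ^ 4 + 4 * (t ^ 3 / (1 - t) ^ 6) := by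
  have : 1 - t ≠ 0 := sub_ne_zero.mpr ht.symm
  field_simp
  ring

def shiftPairEquiv : {p : ℕ × ℕ // p.2 < p.1} ≃ {p : ℕ × ℕ // 1 ≤ p.2 ∧ p.2 < p.1} where
  toFun p := ⟨(p.1.1 + 1, p.1.2 + 1), by omega, by omega⟩
  invFun p := ⟨(p.1.1 - 1, p.1.2 - 1), by omega⟩
  left_inv p := by ext <;> simp
  right_inv p := by ext <;> simp <;> omega

theorem Z3_sq (q : ℝ) (h0 : 0 < q) (h1 : q < 1) :
    (∑' n : ℕ, q ^ (n + 1) * (1 + q ^ (n + 1)) / (1 - q ^ (n + 1)) ^ 3) ^ 2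
    = 2 * (∑' p : {p : ℕ × ℕ // 1 ≤ p.2 ∧ p.2 < p.1},
        (q ^ p.1.1 * (1 + q ^ p.1.1) / (1 - q ^ p.1.1) ^ 3)
          * (q ^ p.1.2 * (1 + q ^ p.1.2) / (1 - q ^ p.1.2) ^ 3))
      + (∑' n : ℕ, q ^ (2 * (n + 1)) / (1 - q ^ (n + 1)) ^ 4)
      + 4 * ∑' n : ℕ, q ^ (3 * (n + 1)) / (1 - q ^ (n + 1)) ^ 6 := by
  let F : ℕ → ℝ := fun n => q ^ n * (1 + q ^ n) / (1 - q ^ n) ^ 3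
  have hF : Summable fun n => ‖F (n + 1)‖ := by
    refine summable_norm_iff.mpr ((summable_nat_add_iff 1).mpr ?_)
    simpa only [F, mul_div_assoc] using summable_pow_mul_comp_pow h0.le h1
      (h := fun t => (1 + t) / (1 - t) ^ 3) (by fun_prop (disch := norm_num))
  have hF2 : Summable fun n => F (n + 1) ^ 2 := by
    simpa only [sq, Function.comp_def] using (summable_mul_of_summable_norm hF hF).comp_injective
      (i := fun n => (n, n)) fun _ _ h => (Prod.mk.inj h).1
  have hterm : ∀ n : ℕ, F (n + 1) ^ 2 = q ^ (2 * (n + 1)) / (1 - q ^ (n + 1)) ^ 4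
      + 4 * (q ^ (3 * (n + 1)) / (1 - q ^ (n + 1)) ^ 6) := fun n => by
    rw [pow_mul', pow_mul']
    exact sq_mul_one_add_div_one_sub_pow_three (pow_lt_one₀ h0.le h1 n.succ_ne_zero).ne
  have hA : Summable fun n : ℕ => q ^ (2 * (n + 1)) / (1 - q ^ (n + 1)) ^ 4 :=
    hF2.of_nonneg_of_le (fun n => by positivity) fun n => by
      rw [hterm]; linarith [show 0 ≤ q ^ (3 * (n + 1)) / (1 - q ^ (n + 1)) ^ 6 by positivity]
  have hB : Summable fun n : ℕ => 4 * (q ^ (3 * (n + 1)) / (1 - q ^ (n + 1)) ^ 6) :=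
    hF2.of_nonneg_of_le (fun n => by positivity) fun n => by
      rw [hterm]; linarith [show 0 ≤ q ^ (2 * (n + 1)) / (1 - q ^ (n + 1)) ^ 4 by positivity]
  rw [tsum_sq_eq_two_mul_tsum_lt_add_tsum_sq hF, tsum_congr hterm, hA.tsum_add hB, tsum_mul_left,
    ← shiftPairEquiv.tsum_eq, add_assoc]
  rfl
end

section
/- The limit as q → 1⁻ of (1-q)^2 · Σ_{n≥1} q^n/(1-q^n)^2 equals ζ(2) = π²/6. -/
/-!
Since `1 - q ^ n = (1 - q) * [n]_q` with `[n]_q = ∑ i < n, q ^ i`, the `n`-th summand times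
`(1 - q) ^ 2` is `q ^ n / [n]_q ^ 2`, which tends to `1 / n ^ 2` as `q → 1`. Cauchy–Schwarz,
pairing `q ^ i` with `q ^ (n - 1 - i)`, gives `[n]_q ^ 2 ≥ n ^ 2 q ^ (n - 1)`, so for `0 < q < 1`
the summands are dominated by `1 / n ^ 2`, and dominated convergence for series yields `ζ(2)`.
-/

open Filter Topology Real Finset

lemma sq_mul_pow_le_geom_sum_sq {q : ℝ} (hq : 0 ≤ q) (n : ℕ) :
    ((n : ℝ) + 1) ^ 2 * q ^ n ≤ (∑ i ∈ range (n + 1), q ^ i) ^ 2 := by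
  have hreflect : ∑ i ∈ range (n + 1), q ^ (n - i) = ∑ i ∈ range (n + 1), q ^ i := by
    simpa using sum_range_reflect (fun i => q ^ i) (n + 1)
  have hCS := sum_sq_le_sum_mul_sum_of_sq_le_mul (range (n + 1)) (r := fun _ => √q ^ n)
    (f := fun i => q ^ i) (g := fun i => q ^ (n - i)) (fun i _ => pow_nonneg hq i)
    (fun i _ => pow_nonneg hq _) fun i hi => by
      rw [← pow_add, pow_right_comm, sq_sqrt hq, Nat.add_sub_cancel' (mem_range_succ_iff.mp hi)]
  rw [hreflect, sum_const, card_range, nsmul_eq_mul, mul_pow, pow_right_comm, sq_sqrt hq] at hCS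
  simpa [sq] using hCS

lemma one_sub_sq_mul_div_one_sub_pow_sq {q : ℝ} (hq : q ≠ 1) (n : ℕ) :
    (1 - q) ^ 2 * (q ^ n / (1 - q ^ n) ^ 2) = q ^ n / (∑ i ∈ range n, q ^ i) ^ 2 := by
  have h : (1 - q) ^ 2 ≠ 0 := pow_ne_zero 2 (sub_ne_zero.mpr hq.symm)
  rw [← mul_neg_geom_sum, mul_pow, mul_div_assoc', mul_div_mul_left _ _ h]

lemma pow_succ_div_geom_sum_sq_le {q : ℝ} (hq₀ : 0 ≤ q) (hq₁ : q ≤ 1) (n : ℕ) :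
    q ^ (n + 1) / (∑ i ∈ range (n + 1), q ^ i) ^ 2 ≤ 1 / ((n : ℝ) + 1) ^ 2 := by
  have hS : 0 < ∑ i ∈ range (n + 1), q ^ i :=
    sum_pos' (fun i _ => pow_nonneg hq₀ i) ⟨0, by simp⟩
  rw [div_le_div_iff₀ (by positivity) (by positivity), one_mul]
  calc q ^ (n + 1) * ((n : ℝ) + 1) ^ 2 ≤ ((n : ℝ) + 1) ^ 2 * q ^ n := by
        rw [pow_succ, mul_comm]
        gcongr
        exact mul_le_of_le_one_right (pow_nonneg hq₀ n) hq₁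
    _ ≤ _ := sq_mul_pow_le_geom_sum_sq hq₀ n

lemma tendsto_pow_succ_div_geom_sum_sq (n : ℕ) :
    Tendsto (fun q : ℝ => q ^ (n + 1) / (∑ i ∈ range (n + 1), q ^ i) ^ 2) (𝓝 1)
      (𝓝 (1 / ((n : ℝ) + 1) ^ 2)) := by
  have h : (∑ i ∈ range (n + 1), (1 : ℝ) ^ i) = n + 1 := by simp
  have hc : ContinuousAt (fun q : ℝ => q ^ (n + 1) / (∑ i ∈ range (n + 1), q ^ i) ^ 2) 1 :=
    ContinuousAt.div (by fun_prop) (by fun_prop) (by rw [h]; positivity)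
  simpa [h] using hc.tendsto

lemma hasSum_one_div_nat_succ_sq : HasSum (fun n : ℕ => 1 / ((n : ℝ) + 1) ^ 2) (π ^ 2 / 6) := by
  simpa using (hasSum_nat_add_iff' 1).mpr hasSum_zeta_two

theorem Z2_limit :
    Tendsto (fun q : ℝ => (1 - q) ^ 2 * ∑' n : ℕ, q ^ (n + 1) / (1 - q ^ (n + 1)) ^ 2)
      (nhdsWithin 1 (Set.Ioo 0 1)) (nhds (π ^ 2 / 6)) := by
  rw [← hasSum_one_div_nat_succ_sq.tsum_eq]
  refine Tendsto.congr' (eventually_nhdsWithin_of_forall fun q hq => ?_)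
    (tendsto_tsum_of_dominated_convergence hasSum_one_div_nat_succ_sq.summable
      (fun n => (tendsto_pow_succ_div_geom_sum_sq n).mono_left nhdsWithin_le_nhds)
      (eventually_nhdsWithin_of_forall fun q hq n => ?_))
  · simp only [← one_sub_sq_mul_div_one_sub_pow_sq hq.2.ne, tsum_mul_left]
  · rw [norm_of_nonneg (div_nonneg (pow_nonneg hq.1.le _) (sq_nonneg _))]
    exact pow_succ_div_geom_sum_sq_le hq.1.le hq.2.le n
end

section
/- The limit as q → 1⁻ of (1-q)^3 · Σ_{n≥1} q^n(1+q^n)/(1-q^n)^3 equals 2·ζ(3). -/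
/-!
Dividing `1 - q ^ m` by `1 - q` turns the `m`-th term of `(1 - q) ^ 3 * Σ` into
`q ^ m (1 + q ^ m) / (1 + q + ⋯ + q ^ (m - 1)) ^ 3`, which is continuous at `q = 1` with value
`2 / m ^ 3`. On `[0, 1]` it is at most `54 / m ^ 3`, so dominated convergence for series applies.
-/

open Filter Topology Finset

noncomputable def qTerm (m : ℕ) (q : ℝ) : ℝ :=
  q ^ m * (1 + q ^ m) / (∑ i ∈ range m, q ^ i) ^ 3

lemma one_sub_pow_three_mul_eq_qTerm {q : ℝ} (hq : q ≠ 1) (m : ℕ) :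
    (1 - q) ^ 3 * (q ^ m * (1 + q ^ m) / (1 - q ^ m) ^ 3) = qTerm m q := by
  have hq' : 1 - q ≠ 0 := sub_ne_zero.2 hq.symm
  rw [qTerm, ← mul_neg_geom_sum, mul_pow]
  field_simp

lemma qTerm_one {m : ℕ} : qTerm m 1 = 2 / (m : ℝ) ^ 3 := by
  norm_num [qTerm]

lemma continuousAt_qTerm_one {m : ℕ} (hm : 0 < m) : ContinuousAt (qTerm m) 1 := by
  refine ContinuousAt.div (by fun_prop) (by fun_prop) ?_
  simp [hm.ne']

lemma qTerm_nonneg {q : ℝ} (hq : 0 ≤ q) (m : ℕ) : 0 ≤ qTerm m q := by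
  unfold qTerm; positivity

lemma succ_mul_pow_le_geom_sum {q : ℝ} (hq₀ : 0 ≤ q) (hq₁ : q ≤ 1) {j m : ℕ} (hjm : j < m) :
    (j + 1) * q ^ j ≤ ∑ i ∈ range m, q ^ i := by
  calc (j + 1) * q ^ j = ∑ _i ∈ range (j + 1), q ^ j := by simp
    _ ≤ ∑ i ∈ range (j + 1), q ^ i :=
        sum_le_sum fun i hi => pow_le_pow_of_le_one hq₀ hq₁ (Nat.lt_succ_iff.1 (mem_range.1 hi))
    _ ≤ ∑ i ∈ range m, q ^ i :=
        sum_le_sum_of_subset_of_nonneg (range_subset_range.2 hjm) fun i _ _ => pow_nonneg hq₀ i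

-- With `j = m / 3`, the geometric sum is at least `(j + 1) q ^ j` while `q ^ m ≤ (q ^ j) ^ 3`.
lemma qTerm_le {q : ℝ} (hq₀ : 0 ≤ q) (hq₁ : q ≤ 1) {m : ℕ} (hm : 0 < m) :
    qTerm m q ≤ 54 / (m : ℝ) ^ 3 := by
  set j := m / 3
  set S := ∑ i ∈ range m, q ^ i
  have hS : (j + 1) * q ^ j ≤ S := succ_mul_pow_le_geom_sum hq₀ hq₁ (by omega)
  have hpow : q ^ m ≤ (q ^ j) ^ 3 := by
    rw [← pow_mul]; exact pow_le_pow_of_le_one hq₀ hq₁ (by omega)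
  have hm3 : (m : ℝ) ≤ 3 * (j + 1) := by exact_mod_cast (by omega : m ≤ 3 * (j + 1))
  have hSpos : 0 < S := by
    have := succ_mul_pow_le_geom_sum hq₀ hq₁ hm
    simp only [CharP.cast_eq_zero, zero_add, pow_zero, mul_one] at this
    linarith
  have hnum : q ^ m * (1 + q ^ m) ≤ 2 * (q ^ j) ^ 3 := by
    nlinarith [pow_le_one₀ hq₀ hq₁ (n := m), pow_nonneg hq₀ m]
  calc qTerm m q ≤ 2 * (q ^ j) ^ 3 / S ^ 3 := by unfold qTerm; gcongr
    _ ≤ 2 / (j + 1) ^ 3 := by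
        rw [div_le_div_iff₀ (by positivity) (by positivity), mul_assoc, ← mul_pow, mul_comm (q ^ j)]
        gcongr
    _ ≤ 54 / (m : ℝ) ^ 3 := by
        rw [div_le_div_iff₀ (by positivity) (by positivity)]
        nlinarith [pow_le_pow_left₀ (Nat.cast_nonneg m) hm3 3]

lemma summable_one_div_succ_pow_three : Summable fun n : ℕ => 1 / ((n : ℝ) + 1) ^ 3 := by
  exact_mod_cast (summable_nat_add_iff 1).2 (Real.summable_one_div_nat_pow.2 (by norm_num : 1 < 3))

theorem Z3_limit :
    Tendsto (fun q : ℝ =>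
        (1 - q) ^ 3 * ∑' n : ℕ, q ^ (n + 1) * (1 + q ^ (n + 1)) / (1 - q ^ (n + 1)) ^ 3)
      (nhdsWithin 1 (Set.Ioo 0 1)) (nhds (2 * ∑' n : ℕ, 1 / ((n : ℝ) + 1) ^ 3)) := by
  have hlim : 2 * ∑' n : ℕ, 1 / ((n : ℝ) + 1) ^ 3 = ∑' n : ℕ, qTerm (n + 1) 1 := by
    rw [← tsum_mul_left]
    congr with n
    rw [qTerm_one]; push_cast; ring
  have hterm : ∀ᶠ q in 𝓝[Set.Ioo 0 1] (1 : ℝ), ∑' n : ℕ, qTerm (n + 1) q =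
      (1 - q) ^ 3 * ∑' n : ℕ, q ^ (n + 1) * (1 + q ^ (n + 1)) / (1 - q ^ (n + 1)) ^ 3 := by
    filter_upwards [self_mem_nhdsWithin] with q hq
    rw [← tsum_mul_left]
    exact tsum_congr fun n => (one_sub_pow_three_mul_eq_qTerm hq.2.ne _).symm
  rw [hlim]
  refine Tendsto.congr' hterm (tendsto_tsum_of_dominated_convergence
    (summable_one_div_succ_pow_three.mul_left 54) (fun n => ?_) ?_)
  · exact ((continuousAt_qTerm_one n.succ_pos).tendsto).mono_left nhdsWithin_le_nhds
  · filter_upwards [self_mem_nhdsWithin] with q hq n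
    rw [Real.norm_of_nonneg (qTerm_nonneg hq.1.le _)]
    simpa [div_eq_mul_inv] using qTerm_le hq.1.le hq.2.le n.succ_pos
end
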